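/- arXiv:2212.01655 — 2 statements merged into one kernel-verified Lean document; each statement's English description precedes it below -/
import Mathlib

section
/- Let V be a real Hilbert space, Vₙ and W finite-dimensional subspaces with β(Vₙ, W) > 0. The PBDW estimator satisfies the sharper bound ‖u − A(P_W u)‖ ≤ β(Vₙ, W)⁻¹ · dist(u, Vₙ ⊕ (W ∩ Vₙ⊥)) for every u ∈ V. -/
/-! Write `Z = Vn ⊔ (W ⊓ Vnᗮ)` and `ω = P_W u`. The `Vnᗮ`-component of the minimiser `A ω` is
orthogonal to `Wᗮ` by first-order optimality, so it lies in `W` and `A ω ∈ Z`. Hence the error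
`e = u - A ω` lies in `Wᗮ` and has the same distance to `Z` as `u`. If `p = v + w` is the projection
of `e` onto `Z`, then `‖p‖² = ⟪e, v⟫ = ⟪e, v - P_W v⟫ ≤ ‖e‖ √(1 - β²) ‖v‖ ≤ √(1 - β²) ‖e‖ ‖p‖`,
so `dist(e, Z)² = ‖e‖² - ‖p‖² ≥ β² ‖e‖²`. -/

open Submodule Metric
open scoped RealInnerProductSpace

theorem Submodule.infDist_eq_norm_sub_starProjection {𝕜 V : Type*} [RCLike 𝕜]
    [NormedAddCommGroup V] [InnerProductSpace 𝕜 V] (K : Submodule 𝕜 V)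
    [K.HasOrthogonalProjection] (u : V) : infDist u K = ‖u - K.starProjection u‖ := by
  refine le_antisymm ?_ ?_
  · simpa [dist_eq_norm] using infDist_le_dist_of_mem (x := u) (K.starProjection_apply_mem u)
  · rw [infDist_eq_iInf, starProjection_minimal]
    simp [dist_eq_norm]

section

variable {V : Type*} [NormedAddCommGroup V] [InnerProductSpace ℝ V]

theorem Submodule.infDist_sub_of_mem (K : Submodule ℝ V) [K.HasOrthogonalProjection]
    {z : V} (hz : z ∈ K) (u : V) : infDist (u - z) K = infDist u K := by
  rw [infDist_eq_norm_sub_starProjection, infDist_eq_norm_sub_starProjection, map_sub,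
    starProjection_eq_self_iff.mpr hz, sub_sub_sub_cancel_right]

theorem real_inner_eq_zero_of_forall_norm_le_norm_add_smul {p q : V}
    (h : ∀ t : ℝ, ‖p‖ ≤ ‖p + t • q‖) : ⟪p, q⟫ = 0 := by
  rcases eq_or_ne q 0 with rfl | hq
  · exact inner_zero_right p
  have hq2 : 0 < ‖q‖ ^ 2 := by positivity
  have key : ∀ t : ℝ, 0 ≤ t * (2 * ⟪p, q⟫ + t * ‖q‖ ^ 2) := fun t => by
    have := pow_le_pow_left₀ (norm_nonneg p) (h t) 2
    rw [norm_add_sq_real, norm_smul, real_inner_smul_right, mul_pow, Real.norm_eq_abs,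
      sq_abs] at this
    linarith
  have := key (-⟪p, q⟫ / ‖q‖ ^ 2)
  field_simp at this
  nlinarith

theorem mem_sup_inf_orthogonal_of_forall_infDist_le (Vn W : Submodule ℝ V)
    [Vn.HasOrthogonalProjection] [W.HasOrthogonalProjection] {x : V}
    (h : ∀ η ∈ Wᗮ, infDist x Vn ≤ infDist (x + η) Vn) : x ∈ Vn ⊔ (W ⊓ Vnᗮ) := by
  set p := x - Vn.starProjection x
  have hpVn : p ∈ Vnᗮ := sub_starProjection_mem_orthogonal x
  have hpW : p ∈ W := by
    rw [← W.orthogonal_orthogonal, mem_orthogonal]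
    intro η hη
    have hmin (t : ℝ) : ‖p‖ ≤ ‖p + t • Vnᗮ.starProjection η‖ := calc
      ‖p‖ = infDist x Vn := (infDist_eq_norm_sub_starProjection Vn x).symm
      _ ≤ infDist (x + t • η) Vn := h _ (smul_mem _ t hη)
      _ = ‖p + t • Vnᗮ.starProjection η‖ := by
        rw [infDist_eq_norm_sub_starProjection, starProjection_orthogonal_val, map_add, map_smul]
        congr 1
        module
    rw [real_inner_comm, ← starProjection_eq_self_iff.mpr hpVn, inner_starProjection_left_eq_right]
    exact real_inner_eq_zero_of_forall_norm_le_norm_add_smul hmin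
  exact mem_sup.mpr ⟨_, Vn.starProjection_apply_mem x, p, ⟨hpW, hpVn⟩, add_sub_cancel _ _⟩

/-- The infimum over the empty type is `0`, so this is `0` when `Vn = ⊥`. -/
noncomputable def infSupConstant (Vn W : Submodule ℝ V) [W.HasOrthogonalProjection] : ℝ :=
  ⨅ v : {v : Vn // v ≠ 0}, ‖W.starProjection (v : Vn)‖ / ‖((v : Vn) : V)‖

section InfSupConstant

variable (Vn W : Submodule ℝ V) [W.HasOrthogonalProjection]

theorem infSupConstant_nonneg : 0 ≤ infSupConstant Vn W :=
  Real.iInf_nonneg fun _ => by positivity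

theorem infSupConstant_mul_norm_le {v : V} (hv : v ∈ Vn) :
    infSupConstant Vn W * ‖v‖ ≤ ‖W.starProjection v‖ := by
  rcases eq_or_ne v 0 with rfl | hv0
  · simp
  rw [← le_div_iff₀ (norm_pos_iff.mpr hv0)]
  refine ciInf_le ⟨0, ?_⟩ (⟨⟨v, hv⟩, by simpa using hv0⟩ : {v : Vn // v ≠ 0})
  rintro _ ⟨_, rfl⟩
  positivity

theorem infSupConstant_le_one : infSupConstant Vn W ≤ 1 := by
  rcases isEmpty_or_nonempty {v : Vn // v ≠ 0} with hempty | ⟨v, hv⟩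
  · simp [infSupConstant, Real.iInf_of_isEmpty]
  have hv0 : 0 < ‖(v : V)‖ := by simpa using hv
  refine le_of_mul_le_mul_right ?_ hv0
  simpa using (infSupConstant_mul_norm_le Vn W v.2).trans (W.norm_starProjection_apply_le v)

theorem norm_sub_starProjection_sq_le {v : V} (hv : v ∈ Vn) :
    ‖v - W.starProjection v‖ ^ 2 ≤ (1 - infSupConstant Vn W ^ 2) * ‖v‖ ^ 2 := by
  have hpyth := norm_sq_eq_add_norm_sq_starProjection v W
  rw [starProjection_orthogonal_val] at hpyth
  have := pow_le_pow_left₀ (by have := infSupConstant_nonneg Vn W; positivity)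
    (infSupConstant_mul_norm_le Vn W hv) 2
  rw [mul_pow] at this
  linarith

variable [(Vn ⊔ (W ⊓ Vnᗮ)).HasOrthogonalProjection]

theorem norm_starProjection_sup_sq_le {e : V} (he : e ∈ Wᗮ) :
    ‖(Vn ⊔ (W ⊓ Vnᗮ)).starProjection e‖ ^ 2 ≤ (1 - infSupConstant Vn W ^ 2) * ‖e‖ ^ 2 := by
  obtain ⟨v, hv, w, hw, hvw⟩ := mem_sup.mp (starProjection_apply_mem (Vn ⊔ (W ⊓ Vnᗮ)) e)
  set p := (Vn ⊔ (W ⊓ Vnᗮ)).starProjection e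
  have hp : ‖p‖ ^ 2 = ⟪e, v - W.starProjection v⟫ := calc
    ‖p‖ ^ 2 = ⟪e, p⟫ := by
      rw [← real_inner_self_eq_norm_sq, eq_comm, ← sub_eq_zero, ← inner_sub_left]
      exact starProjection_inner_eq_zero e p (starProjection_apply_mem _ e)
    _ = ⟪e, v⟫ := by
      rw [← hvw, inner_add_right, real_inner_comm w, inner_right_of_mem_orthogonal hw.1 he, add_zero]
    _ = ⟪e, v - W.starProjection v⟫ := by
      rw [inner_sub_right, real_inner_comm (W.starProjection v),
        inner_right_of_mem_orthogonal (W.starProjection_apply_mem v) he, sub_zero]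
  have hvp : ‖v‖ ^ 2 ≤ ‖p‖ ^ 2 := by
    rw [← hvw, sq, sq, norm_add_sq_eq_norm_sq_add_norm_sq_of_inner_eq_zero v w
      (inner_right_of_mem_orthogonal hv hw.2)]
    nlinarith
  have hcoeff : 0 ≤ 1 - infSupConstant Vn W ^ 2 := by
    nlinarith [infSupConstant_nonneg Vn W, infSupConstant_le_one Vn W]
  have hcs : ‖p‖ ^ 2 ≤ ‖e‖ * ‖v - W.starProjection v‖ := hp ▸ real_inner_le_norm _ _
  have hquartic : ‖p‖ ^ 2 * ‖p‖ ^ 2 ≤ (1 - infSupConstant Vn W ^ 2) * ‖e‖ ^ 2 * ‖p‖ ^ 2 := calc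
    ‖p‖ ^ 2 * ‖p‖ ^ 2 ≤ ‖e‖ ^ 2 * ‖v - W.starProjection v‖ ^ 2 := by
      rw [← sq, ← mul_pow]; exact pow_le_pow_left₀ (by positivity) hcs 2
    _ ≤ ‖e‖ ^ 2 * ((1 - infSupConstant Vn W ^ 2) * ‖v‖ ^ 2) :=
      mul_le_mul_of_nonneg_left (norm_sub_starProjection_sq_le Vn W hv) (by positivity)
    _ ≤ (1 - infSupConstant Vn W ^ 2) * ‖e‖ ^ 2 * ‖p‖ ^ 2 := by
      rw [mul_left_comm, ← mul_assoc]; exact mul_le_mul_of_nonneg_left hvp (by positivity)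
  rcases (sq_nonneg ‖p‖).eq_or_lt with hp0 | hp0
  · rw [← hp0]; positivity
  · exact le_of_mul_le_mul_right hquartic hp0

theorem infSupConstant_mul_norm_le_infDist {e : V} (he : e ∈ Wᗮ) :
    infSupConstant Vn W * ‖e‖ ≤ infDist e (Vn ⊔ (W ⊓ Vnᗮ) : Submodule ℝ V) := by
  rw [infDist_eq_norm_sub_starProjection, ← pow_le_pow_iff_left₀ (by
    have := infSupConstant_nonneg Vn W; positivity) (norm_nonneg _) two_ne_zero]
  have hpyth := norm_sq_eq_add_norm_sq_starProjection e (Vn ⊔ (W ⊓ Vnᗮ))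
  rw [starProjection_orthogonal_val] at hpyth
  have := norm_starProjection_sup_sq_le Vn W he
  rw [mul_pow]
  linarith

end InfSupConstant

end

theorem pbdw_error_bound_sharp_general
    {V : Type*} [NormedAddCommGroup V] [InnerProductSpace ℝ V]
    (Vn W : Submodule ℝ V) [FiniteDimensional ℝ Vn] [FiniteDimensional ℝ W]
    (β : ℝ)
    (hβdef : β = ⨅ v : {v : Vn // v ≠ 0},
        ‖(Submodule.orthogonalProjection W ((v : Vn) : V) : V)‖ / ‖((v : Vn) : V)‖)
    (hβ : 0 < β)
    (A : W → V)
    (hA : ∀ ω : W, (A ω - (ω : V) ∈ Wᗮ) ∧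
      ∀ x : V, x - (ω : V) ∈ Wᗮ →
        Metric.infDist (A ω) (Vn : Set V) ≤ Metric.infDist x (Vn : Set V))
    (u : V) :
    ‖u - A (Submodule.orthogonalProjection W u)‖ ≤
      β⁻¹ * Metric.infDist u ((Vn ⊔ (W ⊓ Vnᗮ) : Submodule ℝ V) : Set V) := by
  obtain rfl : β = infSupConstant Vn W := hβdef
  set ω := W.orthogonalProjectionOnto u
  have hA_mem : A ω ∈ Vn ⊔ (W ⊓ Vnᗮ) :=
    mem_sup_inf_orthogonal_of_forall_infDist_le Vn W fun η hη =>
      (hA ω).2 _ (by simpa [add_sub_right_comm] using add_mem (hA ω).1 hη)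
  have herr : u - A ω ∈ Wᗮ := by
    have := sub_mem (W.sub_starProjection_mem_orthogonal u) (hA ω).1
    rwa [starProjection_apply, sub_sub_sub_cancel_right] at this
  rw [← infDist_sub_of_mem _ hA_mem, le_inv_mul_iff₀ hβ]
  exact infSupConstant_mul_norm_le_infDist Vn W herr

theorem pbdw_error_bound_sharp
    {V : Type*} [NormedAddCommGroup V] [InnerProductSpace ℝ V] [CompleteSpace V]
    (Vn W : Submodule ℝ V) [FiniteDimensional ℝ Vn] [FiniteDimensional ℝ W]
    (β : ℝ)
    (hβdef : β = ⨅ v : {v : Vn // v ≠ 0},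
        ‖(Submodule.orthogonalProjection W ((v : Vn) : V) : V)‖ / ‖((v : Vn) : V)‖)
    (hβ : 0 < β)
    (A : W → V)
    (hA : ∀ ω : W, (A ω - (ω : V) ∈ Wᗮ) ∧
      ∀ x : V, x - (ω : V) ∈ Wᗮ →
        Metric.infDist (A ω) (Vn : Set V) ≤ Metric.infDist x (Vn : Set V))
    (u : V) :
    ‖u - A (Submodule.orthogonalProjection W u)‖ ≤
      β⁻¹ * Metric.infDist u ((Vn ⊔ (W ⊓ Vnᗮ) : Submodule ℝ V) : Set V) :=
  pbdw_error_bound_sharp_general Vn W β hβdef hβ A hA u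
end

section
/- Let V be a real Hilbert space, Vₙ, W finite-dimensional subspaces with β(Vₙ, W) > 0, and A the PBDW estimator. Then A is a left inverse of P_W on Vₙ ⊕ (W ∩ Vₙ⊥): for every v ∈ Vₙ ⊕ (W ∩ Vₙ⊥), A(P_W v) = v. In particular, PBDW reconstructs exactly every element of the reduced space Vₙ. -/
/-!
Write `v = x + w` with `x ∈ Vₙ`, `w ∈ W ∩ Vₙᗮ`, and `e = A(P_W v) - v`. Both `A(P_W v)` and `v` are
feasible, so `e ∈ Wᗮ`, and minimality gives `dist(v + e, Vₙ) ≤ dist(v, Vₙ) = ‖w‖`. Since `w` is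
orthogonal to both `Vₙ` and `e`, Pythagoras gives `dist(v + e, Vₙ)² = ‖w‖² + dist(e, Vₙ)²`, so
`e ∈ Vₙ ∩ Wᗮ`, which is trivial because the inf-sup constant is positive.
-/

open Metric

namespace Submodule

section RCLike

variable {𝕜 E : Type*} [RCLike 𝕜] [NormedAddCommGroup E] [InnerProductSpace 𝕜 E]

theorem infDist_eq_norm_sub_starProjection_s18 (K : Submodule 𝕜 E) [K.HasOrthogonalProjection]
    (x : E) : infDist x K = ‖x - K.starProjection x‖ := by
  rw [starProjection_minimal, infDist_eq_iInf]
  simp only [dist_eq_norm]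
  rfl

theorem mem_of_infDist_add_add_le_norm {K : Submodule 𝕜 E} [K.HasOrthogonalProjection]
    {x w e : E} (hx : x ∈ K) (hwK : w ∈ Kᗮ) (hwe : inner 𝕜 w e = 0)
    (h : infDist (x + w + e) K ≤ ‖w‖) : e ∈ K := by
  have hproj : K.starProjection (x + w + e) = x + K.starProjection e := by
    simp [starProjection_eq_self_iff.mpr hx, (starProjection_apply_eq_zero_iff K).mpr hwK]
  have hsplit : x + w + e - K.starProjection (x + w + e) = w + (e - K.starProjection e) := by
    rw [hproj]; abel
  have horth : inner 𝕜 w (e - K.starProjection e) = 0 := by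
    rw [inner_sub_right, hwe, inner_left_of_mem_orthogonal (K.starProjection_apply_mem e) hwK, sub_zero]
  rw [infDist_eq_norm_sub_starProjection_s18, hsplit] at h
  have hsq := norm_add_sq_eq_norm_sq_add_norm_sq_of_inner_eq_zero _ _ horth
  have hzero : ‖e - K.starProjection e‖ = 0 := by
    nlinarith [norm_nonneg (w + (e - K.starProjection e)), norm_nonneg w,
      norm_nonneg (e - K.starProjection e)]
  exact starProjection_eq_self_iff.mp (sub_eq_zero.mp (norm_eq_zero.mp hzero)).symm

end RCLike

variable {V : Type*} [NormedAddCommGroup V] [InnerProductSpace ℝ V]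

/-- The inf-sup constant `β(Vₙ, W)`; it is `0` when `Vₙ = ⊥`. -/
noncomputable def infSupConstant (Vn W : Submodule ℝ V) [W.HasOrthogonalProjection] : ℝ :=
  ⨅ v : {v : Vn // v ≠ 0}, ‖(W.orthogonalProjectionOnto ((v : Vn) : V) : V)‖ / ‖((v : Vn) : V)‖

theorem disjoint_orthogonal_of_infSupConstant_pos {Vn W : Submodule ℝ V}
    [W.HasOrthogonalProjection] (hβ : 0 < infSupConstant Vn W) : Disjoint Vn Wᗮ := by
  rw [disjoint_def]
  intro x hx hxW
  by_contra hx0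
  have hle : infSupConstant Vn W ≤ ‖(W.orthogonalProjectionOnto x : V)‖ / ‖x‖ :=
    ciInf_le ⟨0, by rintro _ ⟨v, rfl⟩; positivity⟩ (⟨⟨x, hx⟩, by simpa using hx0⟩ : {v : Vn // v ≠ 0})
  rw [orthogonalProjectionOnto_apply_of_mem_orthogonal hxW, ZeroMemClass.coe_zero, norm_zero,
    zero_div] at hle
  exact hβ.not_ge hle

end Submodule

open Submodule

theorem pbdw_exact_on_reduced_space_general
    {V : Type*} [NormedAddCommGroup V] [InnerProductSpace ℝ V]
    (Vn W : Submodule ℝ V) [FiniteDimensional ℝ Vn] [FiniteDimensional ℝ W]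
    (hβ : 0 < ⨅ v : {v : Vn // v ≠ 0},
        ‖(W.orthogonalProjectionOnto ((v : Vn) : V) : V)‖ / ‖((v : Vn) : V)‖)
    (A : W → V)
    (hA : ∀ ω : W, (A ω - (ω : V) ∈ Wᗮ) ∧
      ∀ x : V, x - (ω : V) ∈ Wᗮ →
        Metric.infDist (A ω) (Vn : Set V) ≤ Metric.infDist x (Vn : Set V)) :
    ∀ v ∈ (Vn ⊔ (W ⊓ Vnᗮ) : Submodule ℝ V), A (W.orthogonalProjectionOnto v) = v := by
  intro v hv
  obtain ⟨x, hx, w, ⟨hwW, hwVn⟩, rfl⟩ := mem_sup.mp hv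
  set ω := W.orthogonalProjectionOnto (x + w)
  obtain ⟨hAω, hmin⟩ := hA ω
  have hfeas : x + w - ω ∈ Wᗮ := W.sub_starProjection_mem_orthogonal (x + w)
  have he : A ω - (x + w) ∈ Wᗮ := by
    simpa using Wᗮ.sub_mem hAω hfeas
  have hdist : infDist (x + w + (A ω - (x + w))) Vn ≤ ‖w‖ := calc
    _ = infDist (A ω) Vn := by rw [add_sub_cancel]
    _ ≤ infDist (x + w) Vn := hmin _ hfeas
    _ ≤ dist (x + w) x := infDist_le_dist_of_mem hx
    _ = ‖w‖ := by simp [dist_eq_norm]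
  have heVn := mem_of_infDist_add_add_le_norm hx hwVn (he w hwW) hdist
  exact sub_eq_zero.mp (disjoint_def.mp (disjoint_orthogonal_of_infSupConstant_pos hβ) _ heVn he)

theorem pbdw_exact_on_reduced_space
    {V : Type*} [NormedAddCommGroup V] [InnerProductSpace ℝ V] [CompleteSpace V]
    (Vn W : Submodule ℝ V) [FiniteDimensional ℝ Vn] [FiniteDimensional ℝ W]
    (hβ : 0 < ⨅ v : {v : Vn // v ≠ 0},
        ‖(W.orthogonalProjectionOnto ((v : Vn) : V) : V)‖ / ‖((v : Vn) : V)‖)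
    (A : W → V)
    (hA : ∀ ω : W, (A ω - (ω : V) ∈ Wᗮ) ∧
      ∀ x : V, x - (ω : V) ∈ Wᗮ →
        Metric.infDist (A ω) (Vn : Set V) ≤ Metric.infDist x (Vn : Set V)) :
    ∀ v ∈ (Vn ⊔ (W ⊓ Vnᗮ) : Submodule ℝ V), A (W.orthogonalProjectionOnto v) = v :=
  pbdw_exact_on_reduced_space_general Vn W hβ A hA
end
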